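/- For all integers d ≥ 2 and prime powers q, IM(d, q) ≥ q · IM(d-1, q): given an induced matching of size m in the point-line incidence graph of F_q^{d-1}, one obtains an induced matching of size q·m in F_q^d by taking the Cartesian product with F_q. -/

import Mathlib

/-!
If the points `p i` and lines `p i + F • v i` form an induced matching in `V`, then in `F × V`
the points `(u, p i)` and the horizontal lines `(u, p i) + F • (0, v i)` form one as well: the
first coordinate is constant along the new lines, so a point can only lie on a lifted line of
its own level `u`, and within a level the incidences are those of `V`. Transporting along the
linear isomorphism `F × F^(d-1) ≃ F^d` gives the matching of size `q·m` in `F^d`.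
-/

/-- There is an induced matching of size `m` in the point–line incidence graph of
`F^d`: points `p i` with lines `ℓ_i` through `p i` in direction `v i ≠ 0`, such
that `p i ∈ ℓ_j` iff `i = j`. -/
def HasInducedMatching (F : Type*) [Field F] (d m : ℕ) : Prop :=
  ∃ (p : Fin m → (Fin d → F)) (v : Fin m → (Fin d → F)),
    (∀ i, v i ≠ 0) ∧ ∀ i j : Fin m, (∃ t : F, p i = p j + t • v j) ↔ i = j

section InducedMatching

variable (R : Type*) {V W ι κ : Type*} [Semiring R] [AddCommMonoid V] [Module R V]
  [AddCommMonoid W] [Module R W]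

def IsInducedMatching (p v : ι → V) : Prop :=
  (∀ i, v i ≠ 0) ∧ ∀ i j, (∃ t : R, p i = p j + t • v j) ↔ i = j

variable {R}

theorem hasInducedMatching_iff {F : Type*} [Field F] {d m : ℕ} :
    HasInducedMatching F d m ↔ ∃ p v : Fin m → Fin d → F, IsInducedMatching F p v :=
  Iff.rfl

namespace IsInducedMatching

variable {p v : ι → V}

theorem comp_equiv (h : IsInducedMatching R p v) (e : κ ≃ ι) :
    IsInducedMatching R (p ∘ e) (v ∘ e) :=
  ⟨fun k => h.1 (e k), fun k l => (h.2 (e k) (e l)).trans e.injective.eq_iff⟩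

theorem map (h : IsInducedMatching R p v) (f : V →ₗ[R] W) (hf : Function.Injective f) :
    IsInducedMatching R (f ∘ p) (f ∘ v) := by
  refine ⟨fun i => (map_ne_zero_iff f hf).mpr (h.1 i), fun i j => ?_⟩
  simp only [Function.comp_apply, ← map_smul, ← map_add, hf.eq_iff]
  exact h.2 i j

theorem prod_left (h : IsInducedMatching R p v) :
    IsInducedMatching R (fun x : W × ι => (x.1, p x.2)) (fun x => (0, v x.2)) := by
  refine ⟨fun x hx => h.1 x.2 (congrArg Prod.snd hx), fun x y => ?_⟩
  have incidence (t : R) : (x.1, p x.2) = (y.1, p y.2) + t • ((0 : W), v y.2) ↔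
      x.1 = y.1 ∧ p x.2 = p y.2 + t • v y.2 := by
    simp only [Prod.smul_mk, smul_zero, Prod.mk_add_mk, add_zero, Prod.mk.injEq]
  simp only [incidence, exists_and_left, h.2, Prod.ext_iff]

theorem hasInducedMatching [Fintype ι] {F : Type*} [Field F] {d : ℕ} {p v : ι → Fin d → F}
    (h : IsInducedMatching F p v) : HasInducedMatching F d (Fintype.card ι) :=
  ⟨_, _, h.comp_equiv (Fintype.equivFin ι).symm⟩

end IsInducedMatching

end InducedMatching

theorem HasInducedMatching.succ {F : Type*} [Field F] [Fintype F] {d m : ℕ}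
    (h : HasInducedMatching F d m) : HasInducedMatching F (d + 1) (Fintype.card F * m) := by
  obtain ⟨p, v, hpv⟩ := hasInducedMatching_iff.mp h
  let e := Fin.consLinearEquiv F fun _ : Fin (d + 1) => F
  have lifted := (hpv.prod_left (W := F)).map e.toLinearMap e.injective
  simpa only [Fintype.card_prod, Fintype.card_fin] using lifted.hasInducedMatching

/-- `IM(d, q) ≥ q · IM(d-1, q)`: an induced matching of size `m` in `F_q^{d-1}`
lifts, by taking a Cartesian product with `F_q`, to one of size `q·m` in `F_q^d`. -/
theorem stmt_13 (F : Type*) [Field F] [Fintype F] (d m : ℕ) (hd : 2 ≤ d)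
    (h : HasInducedMatching F (d - 1) m) :
    HasInducedMatching F d (Fintype.card F * m) := by
  obtain ⟨d, rfl⟩ : ∃ d', d = d' + 1 := ⟨d - 1, by omega⟩
  exact h.succ
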